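/- arXiv:2505.18300 — 5 statements merged into one kernel-verified Lean document; each statement's English description precedes it below -/
import Mathlib

section
/- Let X be a finite set, μ a probability distribution on X with all entries strictly positive, and α > 0. If x* is in the interior of the probability simplex and satisfies μᵢ(x*ᵢ/μᵢ)^{-α} / ∑ₖ μₖ(x*ₖ/μₖ)^{-α} = x*ᵢ for all i, then x* = μ. That is, μ is the unique fixed point of the map x ↦ π[x] on the interior of the simplex. -/
theorem stmt_2 {X : Type*} [Fintype X] (μ x : X → ℝ)
    (hμpos : ∀ i, 0 < μ i) (hμsum : ∑ i, μ i = 1)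
    (hxpos : ∀ i, 0 < x i) (hxsum : ∑ i, x i = 1)
    (α : ℝ) (hα : 0 < α)
    (hfix : ∀ i, μ i * (x i / μ i) ^ (-α) / (∑ k, μ k * (x k / μ k) ^ (-α)) = x i) :
    x = μ := by
  have hne : (Finset.univ : Finset X).Nonempty := by
    by_contra h
    rw [Finset.not_nonempty_iff_eq_empty] at h
    rw [h, Finset.sum_empty] at hxsum
    norm_num at hxsum
  set S := ∑ k, μ k * (x k / μ k) ^ (-α) with hSdef
  have hS : 0 < S := by
    apply Finset.sum_pos _ hne
    intro k _
    exact mul_pos (hμpos k) (Real.rpow_pos_of_pos (div_pos (hxpos k) (hμpos k)) _)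
  have hy : (-(α + 1)) ≠ 0 := by
    have : (0:ℝ) < α + 1 := by linarith
    exact neg_ne_zero.mpr this.ne'
  have key : ∀ i, x i = μ i * S ^ (-(α + 1))⁻¹ := by
    intro i
    have hμ := (hμpos i).ne'
    have hx := (hxpos i).ne'
    have hr : 0 < x i / μ i := div_pos (hxpos i) (hμpos i)
    have h1 : μ i * (x i / μ i) ^ (-α) = x i * S := by
      have := hfix i
      field_simp [hS.ne'] at this
      linarith
    have h2 : (x i / μ i) ^ (-α) = (x i / μ i) * S := by
      field_simp at h1 ⊢
      linarith
    have h3 : (x i / μ i) ^ (-(α + 1)) = S := by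
      rw [show -(α + 1) = -α - 1 by ring, Real.rpow_sub hr, Real.rpow_one, h2]
      field_simp
    have h4 : x i / μ i = S ^ (-(α + 1))⁻¹ := by
      rw [← h3]
      exact (Real.rpow_rpow_inv hr.le hy).symm
    rw [← h4]
    field_simp
  have hc : S ^ (-(α + 1))⁻¹ = 1 := by
    have h := Finset.sum_congr rfl fun i (_ : i ∈ Finset.univ) => key i
    rw [hxsum, ← Finset.sum_mul, hμsum, one_mul] at h
    exact h.symm
  funext i
  rw [key i, hc, mul_one]
end

section
/- Let X be a finite set, μ a probability distribution with strictly positive entries, α > 0, and define V(x) = ∑ᵢ μᵢ(xᵢ/μᵢ)^{-α} and π[x]ᵢ = μᵢ(xᵢ/μᵢ)^{-α}/∑ₖ μₖ(xₖ/μₖ)^{-α} on the interior of the probability simplex. Then the directional derivative of V along the vector field x ↦ π[x] − x satisfies ∑ᵢ (∂V/∂xᵢ)(πᵢ[x] − xᵢ) ≤ 0, with equality if and only if x = μ. -/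
/-!
Write `rᵢ = xᵢ / μᵢ` and `cᵢ = rᵢ ^ (-α - 1)`. Then `∂V/∂xᵢ = -α cᵢ`, `μᵢ rᵢ ^ (-α) = cᵢ xᵢ` and
`π[x]ᵢ = cᵢ xᵢ / S` with `S = ∑ₖ cₖ xₖ`, the `x`-mean of `c`. Hence the derivative of `V` along
the flow is `-α / S` times the `x`-variance of `c`, which is nonpositive and vanishes exactly when
`c`, hence `r`, is constant; as `x` and `μ` both sum to `1`, this means `x = μ`.
-/

open Finset Real

theorem deriv_sum_apply_update {X : Type*} [Fintype X] [DecidableEq X] (f : X → ℝ → ℝ)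
    (x : X → ℝ) (i : X) (t₀ : ℝ) :
    deriv (fun t => ∑ k, f k (Function.update x i t k)) t₀ = deriv (f i) t₀ := by
  simp only [Function.apply_update f x i, sum_update_of_mem (mem_univ i)]
  exact deriv_add_const (f := f i) _

theorem hasDerivAt_mul_rpow_div {m t p : ℝ} (hm : m ≠ 0) (ht : t ≠ 0) :
    HasDerivAt (fun s => m * (s / m) ^ p) (p * (t / m) ^ (p - 1)) t := by
  have h := ((hasDerivAt_rpow_const (p := p) (Or.inl (div_ne_zero ht hm))).comp t
    ((hasDerivAt_id t).div_const m)).const_mul m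
  exact h.congr_deriv (by field_simp)

theorem mul_rpow_div_eq {m t p : ℝ} (hm : m ≠ 0) (ht : t ≠ 0) :
    m * (t / m) ^ p = (t / m) ^ (p - 1) * t := by
  rw [rpow_sub_one (div_ne_zero ht hm)]
  field_simp

section WeightedVariance

variable {X : Type*} [Fintype X] (w c : X → ℝ)

theorem sum_mul_tilt_sub_eq_variance_div (hw : ∑ i, w i = 1) (hS : ∑ i, c i * w i ≠ 0) :
    ∑ i, c i * (c i * w i / ∑ j, c j * w j - w i)
      = (∑ i, w i * (c i - ∑ j, c j * w j) ^ 2) / ∑ j, c j * w j := by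
  set S := ∑ j, c j * w j
  have hvar : ∑ i, w i * (c i - S) ^ 2 = ∑ i, c i ^ 2 * w i - S ^ 2 := by
    simp_rw [show ∀ i, w i * (c i - S) ^ 2 = c i ^ 2 * w i - 2 * S * (c i * w i) + S ^ 2 * w i
      from fun i => by ring]
    rw [sum_add_distrib, sum_sub_distrib, ← mul_sum, ← mul_sum, hw]
    ring
  rw [hvar, eq_div_iff hS, sum_mul]
  simp_rw [mul_sub, sub_mul, sum_sub_distrib]
  have hterm : ∀ i, c i * (c i * w i / S) * S = c i ^ 2 * w i := fun i => by field_simp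
  simp_rw [hterm, ← sum_mul]
  ring

theorem sum_mul_sq_sub_eq_zero_iff (hw : ∀ i, 0 < w i) (m : ℝ) :
    ∑ i, w i * (c i - m) ^ 2 = 0 ↔ ∀ i, c i = m := by
  rw [sum_eq_zero_iff_of_nonneg fun i _ => mul_nonneg (hw i).le (sq_nonneg _)]
  simp [(hw _).ne', sub_eq_zero]

end WeightedVariance

theorem eq_of_forall_rpow_div_eq {X : Type*} [Fintype X] {x μ : X → ℝ} {p a : ℝ} (hp : p ≠ 0)
    (hx : ∀ i, 0 ≤ x i) (hμ : ∀ i, 0 < μ i) (hsum : ∑ i, x i = ∑ i, μ i)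
    (hne : ∑ i, μ i ≠ 0)
    (h : ∀ i, (x i / μ i) ^ p = a) : x = μ := by
  have hratio : ∀ i, x i = a ^ p⁻¹ * μ i := fun i => by
    rw [← h i, rpow_rpow_inv (div_nonneg (hx i) (hμ i).le) hp, div_mul_cancel₀ _ (hμ i).ne']
  have hκ : a ^ p⁻¹ = 1 := by
    rw [sum_congr rfl fun i _ => hratio i, ← mul_sum] at hsum
    exact (mul_eq_right₀ hne).mp hsum
  funext i
  rw [hratio i, hκ, one_mul]

theorem stmt_4 {X : Type*} [Fintype X] [DecidableEq X] (μ x : X → ℝ)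
    (hμpos : ∀ i, 0 < μ i) (hμsum : ∑ i, μ i = 1)
    (hxpos : ∀ i, 0 < x i) (hxsum : ∑ i, x i = 1)
    (α : ℝ) (hα : 0 < α) :
    (∑ i, deriv (fun t => ∑ k, μ k * ((Function.update x i t) k / μ k) ^ (-α)) (x i) *
        (μ i * (x i / μ i) ^ (-α) / (∑ k, μ k * (x k / μ k) ^ (-α)) - x i)) ≤ 0 ∧
    ((∑ i, deriv (fun t => ∑ k, μ k * ((Function.update x i t) k / μ k) ^ (-α)) (x i) *
        (μ i * (x i / μ i) ^ (-α) / (∑ k, μ k * (x k / μ k) ^ (-α)) - x i)) = 0 ↔ x = μ) := by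
  set c : X → ℝ := fun i => (x i / μ i) ^ (-α - 1)
  have hV : ∀ i, μ i * (x i / μ i) ^ (-α) = c i * x i := fun i =>
    mul_rpow_div_eq (hμpos i).ne' (hxpos i).ne'
  have hgrad : ∀ i, deriv (fun t => ∑ k, μ k * ((Function.update x i t) k / μ k) ^ (-α)) (x i)
      = -α * c i := fun i => by
    rw [deriv_sum_apply_update (fun k s => μ k * (s / μ k) ^ (-α))]
    exact (hasDerivAt_mul_rpow_div (hμpos i).ne' (hxpos i).ne').deriv
  set S := ∑ j, c j * x j
  have hS : 0 < S :=
    sum_pos (fun i _ => mul_pos (rpow_pos_of_pos (div_pos (hxpos i) (hμpos i)) _) (hxpos i))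
      (nonempty_of_sum_ne_zero (hxsum ▸ one_ne_zero))
  have hdot : (∑ i, deriv (fun t => ∑ k, μ k * ((Function.update x i t) k / μ k) ^ (-α)) (x i) *
        (μ i * (x i / μ i) ^ (-α) / (∑ k, μ k * (x k / μ k) ^ (-α)) - x i))
      = -α * ((∑ i, x i * (c i - S) ^ 2) / S) := by
    simp_rw [hgrad, hV, mul_assoc, ← mul_sum]
    rw [sum_mul_tilt_sub_eq_variance_div x c hxsum hS.ne']
  rw [hdot]
  refine ⟨?_, ?_⟩
  · have hvar : 0 ≤ ∑ i, x i * (c i - S) ^ 2 :=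
      sum_nonneg fun i _ => mul_nonneg (hxpos i).le (sq_nonneg _)
    exact mul_nonpos_of_nonpos_of_nonneg (by linarith) (div_nonneg hvar hS.le)
  · rw [mul_eq_zero, div_eq_zero_iff, sum_mul_sq_sub_eq_zero_iff x c hxpos]
    simp only [neg_eq_zero, hα.ne', hS.ne', false_or, or_false]
    constructor
    · exact fun h => eq_of_forall_rpow_div_eq (by linarith) (fun i => (hxpos i).le) hμpos
        (hxsum.trans hμsum.symm) (hμsum ▸ one_ne_zero) h
    · rintro rfl i
      simp [c, S, div_self (hxpos _).ne', hxsum]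
end

section
/- Let h : Int(Σ) → ℝ^{|X|} be defined by h(x) = π[x] − x where π[x]ᵢ = μᵢ(xᵢ/μᵢ)^{-α}/∑ₖ μₖ(xₖ/μₖ)^{-α} with α ≥ 0 and μ in the interior of the simplex. Then the Jacobian of h at x = μ equals α·μ·1ᵀ − (α+1)·I, i.e., ∂hᵢ/∂xⱼ at μ equals α·μᵢ for j ≠ i and α·μᵢ − (α+1) for j = i. -/
/-!
Move only the `j`-th coordinate, `x = update μ j t`. At `x = μ` every weight
`μₖ (xₖ / μₖ) ^ (-α)` equals `μₖ` and has derivative `-α δⱼₖ` in `t`, so the normaliser equals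
`∑ₖ μₖ = 1` and has derivative `-α`; the quotient rule then gives
`-α δⱼᵢ + α μᵢ`, from which the derivative `δⱼᵢ` of `xᵢ` is subtracted.
-/

theorem HasDerivAt.const_mul_div_rpow {u : ℝ → ℝ} {u' t c : ℝ} (p : ℝ)
    (hu : HasDerivAt u u' t) (hc : c ≠ 0) (hut : u t = c) :
    HasDerivAt (fun s => c * (u s / c) ^ p) (p * u') t := by
  have h := ((hu.div_const c).rpow_const (p := p) (by simp [hut, hc])).const_mul c
  refine h.congr_deriv ?_
  rw [hut, div_self hc, Real.one_rpow]
  field_simp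

theorem hasDerivAt_update_apply {ι : Type*} [DecidableEq ι] (x : ι → ℝ) (j k : ι) (y : ℝ) :
    HasDerivAt (fun t => Function.update x j t k) ((Pi.single j 1 : ι → ℝ) k) y :=
  hasDerivAt_pi.mp (hasDerivAt_update x j y) k

theorem stmt_5_general {X : Type*} [Fintype X] [DecidableEq X] (μ : X → ℝ)
    (hμpos : ∀ i, 0 < μ i) (hμsum : ∑ i, μ i = 1)
    (α : ℝ) (i j : X) :
    deriv (fun t =>
        μ i * ((Function.update μ j t) i / μ i) ^ (-α) /
          (∑ k, μ k * ((Function.update μ j t) k / μ k) ^ (-α)) -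
        (Function.update μ j t) i) (μ j)
      = if j = i then α * μ i - (α + 1) else α * μ i := by
  have hweight : ∀ k, HasDerivAt (fun t => μ k * (Function.update μ j t k / μ k) ^ (-α))
      (-α * (Pi.single j 1 : X → ℝ) k) (μ j) := fun k =>
    (hasDerivAt_update_apply μ j k (μ j)).const_mul_div_rpow (-α) (hμpos k).ne' (by simp)
  have hnorm : HasDerivAt (fun t => ∑ k, μ k * (Function.update μ j t k / μ k) ^ (-α))
      (-α) (μ j) := by
    simpa [← Finset.mul_sum] using HasDerivAt.fun_sum (u := Finset.univ) fun k _ => hweight k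
  have hnorm_at : ∑ k, μ k * (Function.update μ j (μ j) k / μ k) ^ (-α) = 1 := by
    simp [div_self (hμpos _).ne', hμsum]
  rw [((hweight i).fun_div hnorm (by rw [hnorm_at]; exact one_ne_zero)).fun_sub
    (hasDerivAt_update_apply μ j i (μ j)) |>.deriv, hnorm_at]
  obtain rfl | hji := eq_or_ne j i
  · simp [div_self (hμpos j).ne']
    ring
  · simp [div_self (hμpos i).ne', hji, hji.symm]
    ring

theorem stmt_5 {X : Type*} [Fintype X] [DecidableEq X] (μ : X → ℝ)
    (hμpos : ∀ i, 0 < μ i) (hμsum : ∑ i, μ i = 1)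
    (α : ℝ) (hα : 0 ≤ α) (i j : X) :
    deriv (fun t =>
        μ i * ((Function.update μ j t) i / μ i) ^ (-α) /
          (∑ k, μ k * ((Function.update μ j t) k / μ k) ^ (-α)) -
        (Function.update μ j t) i) (μ j)
      = if j = i then α * μ i - (α + 1) else α * μ i :=
  stmt_5_general μ hμpos hμsum α i j
end

section
/- Let u₂,…,uₙ be vectors in ℝⁿ, let λ₂,…,λₙ ∈ [−1,1), and let α ≥ 0. Define V^SRRW = ∑ᵢ (1/(2α(λᵢ+1)+1))·((1+λᵢ)/(1−λᵢ))·uᵢuᵢᵀ and V^HDT = (1/(2α+1))·∑ᵢ ((1+λᵢ)/(1−λᵢ))·uᵢuᵢᵀ. Then V^SRRW − (1/2)·V^HDT is positive semi-definite. -/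
/-! Both matrices are combinations of the same rank-one terms `uᵢuᵢᵀ`, so the difference is one too,
with coefficient `(1/(2α(λᵢ+1)+1) - 1/(2(2α+1))) · (1+λᵢ)/(1-λᵢ)`; it is nonnegative because
`λᵢ + 1 ≤ 2` gives `2α(λᵢ+1)+1 ≤ 2(2α+1)`. -/

open Matrix

theorem Matrix.posSemidef_sum_smul_vecMulVec_self {m ι : Type*} [Finite m] [Fintype ι]
    (u : ι → m → ℝ) {c : ι → ℝ} (hc : ∀ i, 0 ≤ c i) : (∑ i, c i • vecMulVec (u i) (u i)).PosSemidef :=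
  posSemidef_sum _ fun i _ => (posSemidef_vecMulVec_self_star (u i)).smul (hc i)

theorem one_div_two_mul_one_div_le_one_div {α t : ℝ} (hα : 0 ≤ α) (ht₀ : 0 ≤ t) (ht₂ : t ≤ 2) :
    1 / 2 * (1 / (2 * α + 1)) ≤ 1 / (2 * α * t + 1) := by
  rw [div_mul_div_comm, one_mul]
  exact one_div_le_one_div_of_le (by positivity) (by nlinarith)

theorem stmt_8 {n : ℕ} {ι : Type*} [Fintype ι]
    (u : ι → Fin n → ℝ) (lam : ι → ℝ)
    (hlam : ∀ i, -1 ≤ lam i ∧ lam i < 1) (α : ℝ) (hα : 0 ≤ α) :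
    Matrix.PosSemidef
      ((∑ i, (1 / (2 * α * (lam i + 1) + 1) * ((1 + lam i) / (1 - lam i))) •
          Matrix.vecMulVec (u i) (u i)) -
        (1 / 2 : ℝ) • ((1 / (2 * α + 1)) •
          ∑ i, ((1 + lam i) / (1 - lam i)) • Matrix.vecMulVec (u i) (u i))) := by
  simp_rw [smul_smul, Finset.smul_sum, smul_smul, ← Finset.sum_sub_distrib, ← sub_smul, ← sub_mul]
  refine posSemidef_sum_smul_vecMulVec_self u fun i => ?_
  obtain ⟨hlo, hhi⟩ := hlam i
  have hweight := one_div_two_mul_one_div_le_one_div hα (t := lam i + 1) (by linarith) (by linarith)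
  exact mul_nonneg (sub_nonneg.2 hweight) (div_nonneg (by linarith) (by linarith))
end

section
/- Let α ≥ 0, let G = α·1μᵀ − (α+1)·I where μ is a probability vector (so that ∇h(μ)ᵀ = G), and let U be a symmetric matrix with U1 = 0 and 1ᵀU = 0. Then ∫₀^∞ e^{(Gᵀ+I/2)t} U e^{(G+I/2)t} dt = U/(2α+1). -/
/-!
Since `U 1 = 0`, we have `U (1 μᵀ) = 0`, so `U (G + I/2) = -(α + 1/2) U`; dually `1ᵀ U = 0`
gives `(Gᵀ + I/2) U = -(α + 1/2) U`. Thus `U` is an eigenvector of both one-sided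
multiplications, the exponentials act on it by the scalar `e^{-(α + 1/2) t}`, the integrand
is `e^{-(2α + 1) t} U`, and `∫₀^∞ e^{-(2α + 1) t} dt = 1/(2α + 1)`.
-/

open Matrix

theorem pow_mul_eq_of_mul_eq_smul {R A : Type*} [CommSemiring R] [Semiring A] [Algebra R A]
    {x u : A} {c : R} (h : x * u = c • u) (k : ℕ) :
    x ^ k * u = c ^ k • u := by
  induction k with
  | zero => simp
  | succ k ih => rw [pow_succ', mul_assoc, ih, mul_smul_comm, h, smul_smul, pow_succ]

section ExpEigen

variable {A : Type*} [NormedRing A] [NormedAlgebra ℝ A] [CompleteSpace A]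

theorem exp_mul_eq_of_mul_eq_smul {x u : A} {c : ℝ} (h : x * u = c • u) :
    NormedSpace.exp x * u = Real.exp c • u := by
  have hx := (NormedSpace.exp_series_hasSum_exp' (𝕂 := ℝ) x).mul_right u
  have hc := (NormedSpace.exp_series_hasSum_exp' (𝕂 := ℝ) c).smul_const u
  simp only [smul_mul_assoc, pow_mul_eq_of_mul_eq_smul h, smul_smul] at hx
  rw [← Real.exp_eq_exp_ℝ] at hc
  exact hx.unique (by simpa only [smul_eq_mul] using hc)

theorem mul_exp_eq_of_mul_eq_smul {x u : A} {c : ℝ} (h : u * x = c • u) :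
    u * NormedSpace.exp x = Real.exp c • u := by
  have h' : MulOpposite.op x * MulOpposite.op u = c • MulOpposite.op u := by
    rw [← MulOpposite.op_mul, h, MulOpposite.op_smul]
  simpa [← MulOpposite.op_mul] using congrArg MulOpposite.unop (exp_mul_eq_of_mul_eq_smul h')

theorem exp_smul_mul_mul_exp_smul {x y u : A} {c : ℝ} (hy : y * u = c • u) (hx : u * x = c • u)
    (t : ℝ) :
    NormedSpace.exp (t • y) * u * NormedSpace.exp (t • x) = Real.exp (2 * c * t) • u := by
  rw [exp_mul_eq_of_mul_eq_smul (c := t * c) (by rw [smul_mul_assoc, hy, smul_smul]),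
    smul_mul_assoc, mul_exp_eq_of_mul_eq_smul (c := t * c) (by rw [mul_smul_comm, hx, smul_smul]),
    smul_smul, ← Real.exp_add]
  ring_nf

end ExpEigen

section RankOnePerturbation

variable {m R : Type*} [Fintype m] [DecidableEq m] [CommRing R]

theorem mul_smul_vecMulVec_add_smul_one {U : Matrix m m R} {w : m → R} (hU : U *ᵥ w = 0)
    (v : m → R) (a b : R) : U * (a • vecMulVec w v + b • 1) = b • U := by
  rw [mul_add, Matrix.mul_smul, Matrix.mul_smul, mul_vecMulVec, hU, zero_vecMulVec, smul_zero,
    mul_one, zero_add]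

theorem transpose_smul_vecMulVec_add_smul_one_mul {U : Matrix m m R} {w : m → R}
    (hU : w ᵥ* U = 0) (v : m → R) (a b : R) : (a • vecMulVec w v + b • 1)ᵀ * U = b • U := by
  rw [transpose_add, transpose_smul, transpose_smul, transpose_vecMulVec, transpose_one, add_mul,
    smul_mul, smul_mul, vecMulVec_mul, hU, vecMulVec_zero, smul_zero, one_mul, zero_add]

end RankOnePerturbation

theorem stmt_11_general {n : ℕ} (α : ℝ) (hα : 0 ≤ α) (μ : Fin n → ℝ)
    (G : Matrix (Fin n) (Fin n) ℝ)
    (hG : G = α • Matrix.vecMulVec (1 : Fin n → ℝ) μ - (α + 1) • 1)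
    (U : Matrix (Fin n) (Fin n) ℝ)
    (hU1 : U *ᵥ (1 : Fin n → ℝ) = 0) (h1U : (1 : Fin n → ℝ) ᵥ* U = 0) :
    ∀ i j : Fin n,
      (∫ t in Set.Ioi (0 : ℝ),
        (NormedSpace.exp (t • (Gᵀ + (1 / 2 : ℝ) • 1)) * U *
          NormedSpace.exp (t • (G + (1 / 2 : ℝ) • 1))) i j)
      = ((1 / (2 * α + 1)) • U) i j := by
  have hA : G + (1 / 2 : ℝ) • 1 = α • vecMulVec 1 μ + (-(α + 1 / 2)) • 1 := by
    rw [hG]; module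
  have hAt : Gᵀ + (1 / 2 : ℝ) • 1 = (α • vecMulVec 1 μ + (-(α + 1 / 2)) • 1)ᵀ := by
    rw [← hA, transpose_add, transpose_smul, transpose_one]
  have hintegrand (t : ℝ) :
      NormedSpace.exp (t • (Gᵀ + (1 / 2 : ℝ) • 1)) * U *
          NormedSpace.exp (t • (G + (1 / 2 : ℝ) • 1)) = Real.exp (-(2 * α + 1) * t) • U := by
    -- Any submultiplicative norm will do: `NormedSpace.exp` only depends on the topology.
    let _ : NormedRing (Matrix (Fin n) (Fin n) ℝ) := Matrix.linftyOpNormedRing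
    let _ : NormedAlgebra ℝ (Matrix (Fin n) (Fin n) ℝ) := Matrix.linftyOpNormedAlgebra
    rw [hAt, hA]
    refine (exp_smul_mul_mul_exp_smul (transpose_smul_vecMulVec_add_smul_one_mul h1U _ _ _)
      (mul_smul_vecMulVec_add_smul_one hU1 _ _ _) t).trans ?_
    congr 2
    ring
  intro i j
  simp_rw [hintegrand, Matrix.smul_apply, smul_eq_mul, MeasureTheory.integral_mul_const,
    integral_exp_mul_Ioi (by linarith : -(2 * α + 1) < 0)]
  rw [mul_zero, Real.exp_zero, neg_div_neg_eq]

theorem stmt_11 {n : ℕ} (α : ℝ) (hα : 0 ≤ α) (μ : Fin n → ℝ)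
    (hμpos : ∀ i, 0 < μ i) (hμsum : ∑ i, μ i = 1)
    (G : Matrix (Fin n) (Fin n) ℝ)
    (hG : G = α • Matrix.vecMulVec (1 : Fin n → ℝ) μ - (α + 1) • 1)
    (U : Matrix (Fin n) (Fin n) ℝ) (hUsym : U.IsSymm)
    (hU1 : U *ᵥ (1 : Fin n → ℝ) = 0) (h1U : (1 : Fin n → ℝ) ᵥ* U = 0) :
    ∀ i j : Fin n,
      (∫ t in Set.Ioi (0 : ℝ),
        (NormedSpace.exp (t • (Gᵀ + (1 / 2 : ℝ) • 1)) * U *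
          NormedSpace.exp (t • (G + (1 / 2 : ℝ) • 1))) i j)
      = ((1 / (2 * α + 1)) • U) i j :=
  stmt_11_general α hα μ G hG U hU1 h1U
end
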